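/- If λ = Λ(A,B), then the fiber map ψ_λ has exactly one critical point on (0,∞), namely t = T(A,B); at this point ψ_λ''(T(A,B)) = 0, and ψ_λ is strictly increasing on (0,∞). -/

import Mathlib

/-!
Put `λ = Λ(A,B)` and `T = T(A,B)`. The exponents in `Λ` and `T` are chosen so that
`λA²T² = aA(γ-2)/(4-γ)` and `BT^(γ-2) = 2aA/(4-γ)`; substituting `t = sT` then gives
`ψ'(t) = aAt/(4-γ) · ((4-γ) + (γ-2)s² - 2s^(γ-2))`.
The bracket vanishes at `s = 1` and is positive for every other `s > 0` by the strict Bernoulli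
inequality `(s²)^p < 1 + p(s² - 1)` with `p = (γ-2)/2 ∈ (0,1)`. So `T` is the only critical point
and `ψ` increases strictly on both sides of it, while `ψ''(T) = aA + 3λA²T² - (γ-1)BT^(γ-2)`
vanishes by the same two identities.
-/

open Real Set Filter

/-- Fiber map `ψ_λ(t) = (a/2)·A·t² + (λ/4)·A²·t⁴ − (1/γ)·B·t^γ`. -/
noncomputable def psi (a γ A B lam t : ℝ) : ℝ :=
  a / 2 * A * t ^ 2 + lam / 4 * A ^ 2 * t ^ 4 - 1 / γ * B * t ^ γ

/-- The constant `C_{a,γ} = a·((γ−2)/(4−γ))·((4−γ)/(2a))^(2/(γ−2))`. -/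
noncomputable def Cag (a γ : ℝ) : ℝ :=
  a * ((γ - 2) / (4 - γ)) * ((4 - γ) / (2 * a)) ^ (2 / (γ - 2))

/-- The extremal value `Λ(A,B) = C_{a,γ}·B^(2/(γ−2))·A^(−γ/(γ−2))`. -/
noncomputable def Lam (a γ A B : ℝ) : ℝ :=
  Cag a γ * B ^ (2 / (γ - 2)) * A ^ (-(γ / (γ - 2)))

/-- `T(A,B) = (2aA/((4−γ)B))^(1/(γ−2))`. -/
noncomputable def Tab (a γ A B : ℝ) : ℝ :=
  (2 * a * A / ((4 - γ) * B)) ^ (1 / (γ - 2))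

theorem two_mul_rpow_sub_two_lt {γ s : ℝ} (hγ2 : 2 < γ) (hγ4 : γ < 4) (hs : 0 < s)
    (hs1 : s ≠ 1) : 2 * s ^ (γ - 2) < 4 - γ + (γ - 2) * s ^ 2 := by
  have hsq : s ^ 2 - 1 ≠ 0 := by
    intro h
    exact hs1 (by nlinarith [sq_nonneg (s - 1)])
  have bernoulli := rpow_one_add_lt_one_add_mul_self (s := s ^ 2 - 1) (p := (γ - 2) / 2)
    (by nlinarith) hsq (by linarith) (by linarith)
  have hpow : (s ^ 2) ^ ((γ - 2) / 2) = s ^ (γ - 2) := by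
    rw [← rpow_natCast, ← rpow_mul hs.le, Nat.cast_ofNat, mul_div_cancel₀ _ two_ne_zero]
  rw [add_sub_cancel, hpow] at bernoulli
  linarith

theorem strictMonoOn_Ioi_of_deriv_pos_of_ne {f : ℝ → ℝ} {c x₀ : ℝ} (hc : c < x₀)
    (hf : ContinuousOn f (Ioi c)) (hf' : ∀ x, c < x → x ≠ x₀ → 0 < deriv f x) :
    StrictMonoOn f (Ioi c) := by
  rw [← Ioc_union_Ici_eq_Ioi hc] at hf ⊢
  refine StrictMonoOn.union ?_ ?_ (isGreatest_Ioc hc) isLeast_Ici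
  · refine strictMonoOn_of_deriv_pos (convex_Ioc c x₀) (hf.mono subset_union_left) ?_
    intro x hx
    rw [interior_Ioc] at hx
    exact hf' x hx.1 hx.2.ne
  · refine strictMonoOn_of_deriv_pos (convex_Ici x₀) (hf.mono subset_union_right) ?_
    intro x hx
    rw [interior_Ici] at hx
    exact hf' x (hc.trans hx) hx.ne'

section FiberMap

variable {a γ A B lam : ℝ}

theorem hasDerivAt_psi (hγ : 1 ≤ γ) (t : ℝ) :
    HasDerivAt (psi a γ A B lam) (a * A * t + lam * A ^ 2 * t ^ 3 - B * t ^ (γ - 1)) t := by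
  have hpow := hasDerivAt_rpow_const (x := t) (Or.inr hγ)
  refine ((((hasDerivAt_pow 2 t).const_mul (a / 2 * A)).add
    ((hasDerivAt_pow 4 t).const_mul (lam / 4 * A ^ 2))).sub
      (hpow.const_mul (1 / γ * B))).congr_deriv ?_
  field_simp
  ring

theorem deriv_psi (hγ : 1 ≤ γ) :
    deriv (psi a γ A B lam) = fun t => a * A * t + lam * A ^ 2 * t ^ 3 - B * t ^ (γ - 1) :=
  funext fun t => (hasDerivAt_psi hγ t).deriv

theorem hasDerivAt_deriv_psi (hγ : 2 ≤ γ) (t : ℝ) :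
    HasDerivAt (deriv (psi a γ A B lam))
      (a * A + 3 * lam * A ^ 2 * t ^ 2 - (γ - 1) * B * t ^ (γ - 2)) t := by
  rw [deriv_psi (by linarith)]
  have hpow := hasDerivAt_rpow_const (x := t) (p := γ - 1) (Or.inr (by linarith))
  rw [show γ - 1 - 1 = γ - 2 by ring] at hpow
  refine ((((hasDerivAt_id t).const_mul (a * A)).add
    ((hasDerivAt_pow 3 t).const_mul (lam * A ^ 2))).sub (hpow.const_mul B)).congr_deriv ?_
  push_cast
  ring

theorem continuous_psi (hγ : 1 ≤ γ) : Continuous (psi a γ A B lam) :=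
  continuous_iff_continuousAt.2 fun t => (hasDerivAt_psi hγ t).continuousAt

end FiberMap

section Extremal

variable {a γ A B : ℝ}

theorem Tab_pos (ha : 0 < a) (hγ4 : γ < 4) (hA : 0 < A) (hB : 0 < B) : 0 < Tab a γ A B := by
  have h4 : 0 < 4 - γ := by linarith
  exact rpow_pos_of_pos (by positivity) _

theorem mul_Tab_rpow_sub_two (ha : 0 < a) (hγ2 : 2 < γ) (hγ4 : γ < 4) (hA : 0 < A)
    (hB : 0 < B) : B * Tab a γ A B ^ (γ - 2) = 2 * a * A / (4 - γ) := by
  have h4 : 0 < 4 - γ := by linarith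
  rw [Tab, one_div, rpow_inv_rpow (by positivity) (by linarith)]
  field_simp

theorem Lam_mul_sq_mul_Tab_sq (ha : 0 < a) (hγ2 : 2 < γ) (hγ4 : γ < 4) (hA : 0 < A)
    (hB : 0 < B) : Lam a γ A B * A ^ 2 * Tab a γ A B ^ 2 = a * A * (γ - 2) / (4 - γ) := by
  have h2 : γ - 2 ≠ 0 := by linarith
  have h4 : 0 < 4 - γ := by linarith
  set q := 2 / (γ - 2)
  set x := 2 * a * A / ((4 - γ) * B)
  have hx : 0 < x := by positivity
  have hT2 : Tab a γ A B ^ 2 = x ^ q := by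
    rw [Tab, ← rpow_natCast, ← rpow_mul hx.le]
    congr 1
    simp only [q]
    field_simp
    norm_num
  have hcollect : ((4 - γ) / (2 * a)) ^ q * B ^ q * x ^ q = A ^ q := by
    rw [← mul_rpow (by positivity) hB.le, ← mul_rpow (by positivity) hx.le]
    congr 1
    simp only [x]
    field_simp
  have hexp : A ^ q * A ^ (-(γ / (γ - 2))) = A⁻¹ := by
    rw [← rpow_add hA, ← rpow_neg_one]
    congr 1
    simp only [q]
    field_simp
    ring
  calc Lam a γ A B * A ^ 2 * Tab a γ A B ^ 2
      = a * ((γ - 2) / (4 - γ)) * (((4 - γ) / (2 * a)) ^ q * B ^ q * x ^ q)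
          * A ^ (-(γ / (γ - 2))) * A ^ 2 := by
        rw [Lam, Cag, hT2]; ring
    _ = a * ((γ - 2) / (4 - γ)) * (A ^ q * A ^ (-(γ / (γ - 2)))) * A ^ 2 := by
        rw [hcollect]; ring
    _ = a * A * (γ - 2) / (4 - γ) := by
        rw [hexp]; field_simp

theorem deriv_psi_Lam_mul_Tab (ha : 0 < a) (hγ2 : 2 < γ) (hγ4 : γ < 4) (hA : 0 < A)
    (hB : 0 < B) {s : ℝ} (hs : 0 < s) :
    deriv (psi a γ A B (Lam a γ A B)) (s * Tab a γ A B)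
      = a * A * (s * Tab a γ A B) / (4 - γ) * (4 - γ + (γ - 2) * s ^ 2 - 2 * s ^ (γ - 2)) := by
  have hT := Tab_pos ha hγ4 hA hB
  have hinv : (4 - γ) * (4 - γ)⁻¹ = 1 := mul_inv_cancel₀ (by linarith)
  have hsplit : (s * Tab a γ A B) ^ (γ - 1)
      = s ^ (γ - 2) * Tab a γ A B ^ (γ - 2) * (s * Tab a γ A B) := by
    rw [show γ - 1 = γ - 2 + 1 by ring, rpow_add_one (by positivity), mul_rpow hs.le hT.le]
  rw [(hasDerivAt_psi (by linarith) _).deriv, hsplit]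
  linear_combination (s ^ 3 * Tab a γ A B) * Lam_mul_sq_mul_Tab_sq ha hγ2 hγ4 hA hB
    - (s ^ (γ - 2) * s * Tab a γ A B) * mul_Tab_rpow_sub_two ha hγ2 hγ4 hA hB
    - (a * A * s * Tab a γ A B) * hinv

theorem deriv_psi_Lam_pos (ha : 0 < a) (hγ2 : 2 < γ) (hγ4 : γ < 4) (hA : 0 < A)
    (hB : 0 < B) {t : ℝ} (ht : 0 < t) (hne : t ≠ Tab a γ A B) :
    0 < deriv (psi a γ A B (Lam a γ A B)) t := by
  have hT := Tab_pos ha hγ4 hA hB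
  have h4 : 0 < 4 - γ := by linarith
  have hs : 0 < t / Tab a γ A B := div_pos ht hT
  have hlt := two_mul_rpow_sub_two_lt hγ2 hγ4 hs (by rwa [ne_eq, div_eq_one_iff_eq hT.ne'])
  rw [← div_mul_cancel₀ t hT.ne', deriv_psi_Lam_mul_Tab ha hγ2 hγ4 hA hB hs]
  exact mul_pos (by positivity) (by linarith)

theorem deriv_psi_Lam_Tab (ha : 0 < a) (hγ2 : 2 < γ) (hγ4 : γ < 4) (hA : 0 < A)
    (hB : 0 < B) : deriv (psi a γ A B (Lam a γ A B)) (Tab a γ A B) = 0 := by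
  have h := deriv_psi_Lam_mul_Tab ha hγ2 hγ4 hA hB one_pos
  rw [one_mul] at h
  rw [h, one_rpow]
  ring

theorem deriv_deriv_psi_Lam_Tab (ha : 0 < a) (hγ2 : 2 < γ) (hγ4 : γ < 4) (hA : 0 < A)
    (hB : 0 < B) : deriv (deriv (psi a γ A B (Lam a γ A B))) (Tab a γ A B) = 0 := by
  have hinv : (4 - γ) * (4 - γ)⁻¹ = 1 := mul_inv_cancel₀ (by linarith)
  rw [(hasDerivAt_deriv_psi hγ2.le _).deriv]
  linear_combination 3 * Lam_mul_sq_mul_Tab_sq ha hγ2 hγ4 hA hB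
    - (γ - 1) * mul_Tab_rpow_sub_two ha hγ2 hγ4 hA hB - a * A * hinv

end Extremal

/-- for `λ = Λ(A,B)` the fiber map `ψ_λ` has exactly one critical point
on `(0,∞)`, namely `t = T(A,B)`; there `ψ_λ'' = 0`, and `ψ_λ` is strictly increasing
on `(0,∞)`. -/
theorem stmt_2 (a γ A B lam : ℝ) (ha : 0 < a) (hγ2 : 2 < γ) (hγ4 : γ < 4)
    (hA : 0 < A) (hB : 0 < B) (hlam : lam = Lam a γ A B) :
    0 < Tab a γ A B ∧
    deriv (psi a γ A B lam) (Tab a γ A B) = 0 ∧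
    deriv (deriv (psi a γ A B lam)) (Tab a γ A B) = 0 ∧
    (∀ t : ℝ, 0 < t → deriv (psi a γ A B lam) t = 0 → t = Tab a γ A B) ∧
    StrictMonoOn (psi a γ A B lam) (Set.Ioi 0) := by
  subst hlam
  refine ⟨Tab_pos ha hγ4 hA hB, deriv_psi_Lam_Tab ha hγ2 hγ4 hA hB,
    deriv_deriv_psi_Lam_Tab ha hγ2 hγ4 hA hB, fun t ht hcrit => ?_, ?_⟩
  · by_contra hne
    exact (deriv_psi_Lam_pos ha hγ2 hγ4 hA hB ht hne).ne' hcrit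
  · exact strictMonoOn_Ioi_of_deriv_pos_of_ne (Tab_pos ha hγ4 hA hB)
      (continuous_psi (by linarith)).continuousOn
      fun t ht hne => deriv_psi_Lam_pos ha hγ2 hγ4 hA hB ht hne
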